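/- arXiv:2103.00835 — 3 statements merged into one kernel-verified Lean document; each statement's English description precedes it below -/
import Mathlib

section
/- Let I ⊆ ℝ be a nondegenerate interval, let f : ℝ → ℝ be real-analytic, and let (g_n)_{n∈ℕ} be a countable family of real-analytic functions on ℝ. If for every x ∈ I there exists n ∈ ℕ with f(x) = g_n(x), then there exists n ∈ ℕ such that f(x) = g_n(x) for all x ∈ I. -/
/-!
The interval `[x, y] ⊆ I` is uncountable and is covered by the countably many agreement sets
`{t | f t = g n t}`, so one of them meets `[x, y]` in an uncountable, hence infinite, set. Inside
the compact interval this set has an accumulation point, and the identity theorem gives `f = g n`.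
-/

open Set Filter Topology

theorem Set.exists_not_countable_inter_of_subset_iUnion {α ι : Type*} [Countable ι]
    {s : Set α} {t : ι → Set α} (hs : ¬s.Countable) (hst : s ⊆ ⋃ i, t i) :
    ∃ i, ¬(s ∩ t i).Countable := by
  by_contra! hcount
  refine hs ((countable_iUnion hcount).mono fun z hz => ?_)
  obtain ⟨i, hi⟩ := mem_iUnion.mp (hst hz)
  exact mem_iUnion.mpr ⟨i, hz, hi⟩

theorem Real.uIcc_not_countable {x y : ℝ} (hxy : x ≠ y) : ¬(uIcc x y).Countable := by
  rw [uIcc, Cardinal.Real.Icc_countable_iff, not_le]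
  exact min_lt_max.mpr hxy

theorem AnalyticOnNhd.eqOn_of_preconnected_of_eqOn_infinite {𝕜 E : Type*}
    [NontriviallyNormedField 𝕜] [NormedAddCommGroup E] [NormedSpace 𝕜 E]
    {f g : 𝕜 → E} {U K s : Set 𝕜} (hf : AnalyticOnNhd 𝕜 f U) (hg : AnalyticOnNhd 𝕜 g U)
    (hU : IsPreconnected U) (hK : IsCompact K) (hKU : K ⊆ U) (hs : s.Infinite) (hsK : s ⊆ K)
    (hfg : EqOn f g s) : EqOn f g U := by
  obtain ⟨z, hzK, hz⟩ := hs.exists_accPt_of_subset_isCompact hK hsK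
  exact hf.eqOn_of_preconnected_of_frequently_eq hg hU (hKU hzK)
    ((accPt_iff_frequently_nhdsNE.mp hz).mono fun t ht => hfg ht)

/-- If a real-analytic function `f` agrees at every point of a nondegenerate interval `I`
with some member of a countable family of real-analytic functions `g n`, then `f` agrees
with a single `g n` on all of `I`. -/
theorem stmt0 (I : Set ℝ) (hI : I.OrdConnected)
    (x y : ℝ) (hx : x ∈ I) (hy : y ∈ I) (hxy : x ≠ y)
    (f : ℝ → ℝ) (g : ℕ → ℝ → ℝ)
    (hf : ∀ t : ℝ, AnalyticAt ℝ f t)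
    (hg : ∀ n : ℕ, ∀ t : ℝ, AnalyticAt ℝ (g n) t)
    (h : ∀ t ∈ I, ∃ n : ℕ, f t = g n t) :
    ∃ n : ℕ, ∀ t ∈ I, f t = g n t := by
  have hcover : uIcc x y ⊆ ⋃ n, {t | f t = g n t} := fun t ht =>
    mem_iUnion.mpr (h t (hI.uIcc_subset hx hy ht))
  obtain ⟨n, hn⟩ := exists_not_countable_inter_of_subset_iUnion (Real.uIcc_not_countable hxy) hcover
  have hfg : EqOn f (g n) univ :=
    AnalyticOnNhd.eqOn_of_preconnected_of_eqOn_infinite (fun t _ => hf t) (fun t _ => hg n t)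
      isPreconnected_univ isCompact_uIcc (subset_univ _) (fun hfin => hn hfin.countable)
      inter_subset_left fun _ ht => ht.2
  exact ⟨n, fun t _ => hfg (mem_univ t)⟩
end

section
/- Let π : X → Y be a surjection, A : X → X and B : Y → Y maps with π ∘ A = B ∘ π. Let a group Γ act on X, a group Γ' act on Y, and let ρ : Γ → Γ' be a surjective homomorphism with π(γ · x) = ρ(γ) · π(x) for all γ ∈ Γ, x ∈ X. Assume: (i) for every x ∈ X, the grand orbit of x under A equals the Γ-orbit of x; (ii) for every y ∈ Y there exists γ' ∈ Γ' with B(y) = γ' · y. Then for every y ∈ Y, the grand orbit of y under B equals the Γ'-orbit of y. -/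
/-- The grand orbit of `x` under `A`: all `x'` with `A^[m] x = A^[n] x'` for some `m, n`. -/
def grandOrbit {X : Type*} (A : X → X) (x : X) : Set X :=
  {x' | ∃ m n : ℕ, A^[m] x = A^[n] x'}

/-- Transfer of orbit equivalence along an equivariant semiconjugacy: if `π` semiconjugates
`A` to `B` and intertwines the `Γ`-action with the `Γ'`-action via a surjective homomorphism
`ρ`, grand orbits of `A` are `Γ`-orbits, and `B` moves every point by a group element, then
grand orbits of `B` are `Γ'`-orbits. -/
theorem stmt5 {X Y : Type*} (π : X → Y) (hπ : Function.Surjective π)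
    (A : X → X) (B : Y → Y) (hsemi : π ∘ A = B ∘ π)
    {Γ Γ' : Type*} [Group Γ] [Group Γ'] [MulAction Γ X] [MulAction Γ' Y]
    (ρ : Γ →* Γ') (hρ : Function.Surjective ρ)
    (hequi : ∀ (γ : Γ) (x : X), π (γ • x) = ρ γ • π x)
    (h1 : ∀ x : X, grandOrbit A x = MulAction.orbit Γ x)
    (h2 : ∀ y : Y, ∃ γ' : Γ', B y = γ' • y) :
    ∀ y : Y, grandOrbit B y = MulAction.orbit Γ' y := by
  intro y
  have hsc : Function.Semiconj π A B := fun x => congrFun hsemi x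
  have hiter : ∀ m : ℕ, ∀ x : X, π (A^[m] x) = B^[m] (π x) := fun m x =>
    (hsc.iterate_right m) x
  -- B^[k] y is in the Γ' orbit of y
  have hk : ∀ (k : ℕ) (z : Y), ∃ g : Γ', B^[k] z = g • z := by
    intro k
    induction k with
    | zero => exact fun z => ⟨1, by simp⟩
    | succ n ih =>
      intro z
      obtain ⟨g, hg⟩ := ih z
      obtain ⟨g', hg'⟩ := h2 (B^[n] z)
      exact ⟨g' * g, by rw [Function.iterate_succ_apply', hg', hg, mul_smul]⟩
  ext y'
  constructor
  · rintro ⟨m, n, hmn⟩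
    obtain ⟨g, hg⟩ := hk m y
    obtain ⟨h, hh⟩ := hk n y'
    refine ⟨h⁻¹ * g, ?_⟩
    have : g • y = h • y' := by rw [← hg, ← hh, hmn]
    show (h⁻¹ * g) • y = y'
    rw [mul_smul, this, inv_smul_smul]
  · rintro ⟨g', rfl⟩
    obtain ⟨x, rfl⟩ := hπ y
    obtain ⟨γ, rfl⟩ := hρ g'
    have hmem : γ • x ∈ grandOrbit A x := by
      rw [h1]; exact ⟨γ, rfl⟩
    obtain ⟨m, n, hmn⟩ := hmem
    refine ⟨m, n, ?_⟩
    simp only [← hequi, ← hiter, hmn]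
end

section
/- Let a group Γ act on a set X and be generated by a subset S. Let A : X → X be a map such that: (i) for every x ∈ X there exists γ ∈ Γ with A(x) = γ · x; and (ii) for every g ∈ S and every x ∈ X, either A(x) = g · x or A(g · x) = x. Then for every x ∈ X, the grand orbit of x under A equals the Γ-orbit of x. -/
lemma go_symm {X : Type*} {A : X → X} {x y : X}
    (h : y ∈ grandOrbit A x) : x ∈ grandOrbit A y := by
  obtain ⟨m, n, h⟩ := h
  exact ⟨n, m, h.symm⟩

lemma go_trans {X : Type*} {A : X → X} {x y z : X}
    (h : y ∈ grandOrbit A x) (h' : z ∈ grandOrbit A y) : z ∈ grandOrbit A x := by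
  obtain ⟨m, n, h⟩ := h
  obtain ⟨p, q, h'⟩ := h'
  refine ⟨p + m, n + q, ?_⟩
  rw [Function.iterate_add_apply, h, ← Function.iterate_add_apply, Nat.add_comm p n,
    Function.iterate_add_apply, h', ← Function.iterate_add_apply]

/-- Bowen–Series orbit equivalence criterion: if `A` moves every point by a group element,
and for each generator `g` and each point `x` either `A x = g • x` or `A (g • x) = x`,
then grand orbits of `A` coincide with `Γ`-orbits. -/
theorem stmt6 {Γ : Type*} [Group Γ] {X : Type*} [MulAction Γ X]
    (S : Set Γ) (hS : Subgroup.closure S = ⊤)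
    (A : X → X)
    (h1 : ∀ x : X, ∃ γ : Γ, A x = γ • x)
    (h2 : ∀ g ∈ S, ∀ x : X, A x = g • x ∨ A (g • x) = x) :
    ∀ x : X, grandOrbit A x = MulAction.orbit Γ x := by
  have hiter : ∀ (k : ℕ) (x : X), ∃ γ : Γ, A^[k] x = γ • x := by
    intro k
    induction k with
    | zero => exact fun x => ⟨1, (one_smul Γ x).symm⟩
    | succ k ih =>
      intro x
      obtain ⟨γ, hγ⟩ := ih x
      obtain ⟨δ, hδ⟩ := h1 (A^[k] x)
      exact ⟨δ * γ, by rw [Function.iterate_succ_apply', hδ, hγ, mul_smul]⟩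
  intro x
  apply Set.eq_of_subset_of_subset
  · rintro x' ⟨m, n, h⟩
    obtain ⟨γ, hγ⟩ := hiter m x
    obtain ⟨δ, hδ⟩ := hiter n x'
    refine ⟨δ⁻¹ * γ, ?_⟩
    have : γ • x = δ • x' := by rw [← hγ, ← hδ, h]
    show (δ⁻¹ * γ) • x = x'
    rw [mul_smul, this, inv_smul_smul]
  · rintro z ⟨γ, rfl⟩
    have key : ∀ γ : Γ, ∀ x : X, γ • x ∈ grandOrbit A x := by
      have : ∀ γ ∈ Subgroup.closure S, ∀ x : X, γ • x ∈ grandOrbit A x := by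
        intro γ hγ
        induction hγ using Subgroup.closure_induction with
        | mem g hg =>
          intro x
          rcases h2 g hg x with h | h
          · exact ⟨1, 0, h⟩
          · exact ⟨0, 1, h.symm⟩
        | one => intro x; rw [one_smul]; exact ⟨0, 0, rfl⟩
        | mul a b _ _ ha hb =>
          intro x
          rw [mul_smul]
          exact go_trans (hb x) (ha (b • x))
        | inv a _ ha =>
          intro x
          have := ha (a⁻¹ • x)
          rw [smul_inv_smul] at this
          exact go_symm this
      intro γ x
      exact this γ (by rw [hS]; trivial) x
    exact key γ x
end
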